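/- arXiv:1212.0048 — 3 statements merged into one kernel-verified Lean document; each statement's English description precedes it below -/
import Mathlib

section
/- For every integer U ≥ 1, W*(U) = [p ∣ U]·W(U/p) + [q ∣ U]·W(U/q) − [pq ∣ U]·W(U/(pq)), where [p ∣ U]·W(U/p) means W(U/p) if p divides U and 0 otherwise, and similarly for the other two terms. -/
/-!
The smallest part of a chained partition divides all the others. In a partition without the
part `1` the smallest part is `p ^ a * q ^ b` with `(a, b) ≠ (0, 0)`, so all its parts are
divisible by `p` or all by `q`. For `d = p ^ i * q ^ j`, dividing every part by `d` is a bijection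
from the partitions of `U` with all parts divisible by `d` onto `Ω(U / d)`. By coprimality the
partitions with all parts divisible by both `p` and `q` are those for `d = p * q`, and
inclusion–exclusion gives the formula.
-/

/-- A strictly chained `(p,q)`-ary partition of `U`: a finite strictly decreasing
list of positive integers of the form `p^a * q^b`, each part divisible by the next,
summing to `U`. -/
def IsSCPartition (p q U : ℕ) (l : List ℕ) : Prop :=
  (∀ x ∈ l, ∃ a b : ℕ, x = p ^ a * q ^ b) ∧
  List.Chain' (fun x y => y ∣ x ∧ y < x) l ∧
  l.sum = U

/-- The set of strictly chained `(p,q)`-ary partitions of `U`. -/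
def Omega (p q U : ℕ) : Set (List ℕ) := {l | IsSCPartition p q U l}

/-- The subset of `Omega p q U` of partitions with no part equal to `1`. -/
def OmegaStar (p q U : ℕ) : Set (List ℕ) := {l | IsSCPartition p q U l ∧ 1 ∉ l}

/-- `W p q U` is the number of strictly chained `(p,q)`-ary partitions of `U`. -/
noncomputable def W (p q U : ℕ) : ℕ := (Omega p q U).ncard

/-- `Wstar p q U` is the number of strictly chained `(p,q)`-ary partitions of `U`
with no part equal to `1`. -/
noncomputable def Wstar (p q U : ℕ) : ℕ := (OmegaStar p q U).ncard

def OmegaDvd (p q d U : ℕ) : Set (List ℕ) := {l | IsSCPartition p q U l ∧ ∀ x ∈ l, d ∣ x}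

theorem omega_finite (p q U : ℕ) : (Omega p q U).Finite := by
  refine ((Finset.range (U + 1)).powerset.finite_toSet.image
    fun s => s.sort (· ≥ ·)).subset fun l ⟨_, hchain, hsum⟩ => ⟨l.toFinset, ?_, ?_⟩
  · simp only [Finset.coe_powerset, Set.mem_preimage, Set.mem_powerset_iff, Finset.coe_subset]
    intro x hx
    have := List.le_sum_of_mem (List.mem_toFinset.mp hx)
    simp only [Finset.mem_range]
    omega
  · have hlt : l.Pairwise (· > ·) := (List.isChain_iff_pairwise.mp (hchain.imp fun _ _ h => h.2))
    exact (List.toFinset_sort _ hlt.nodup).mpr (hlt.imp le_of_lt)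

theorem List.getLast_dvd_of_isChain {α : Type*} [Monoid α] {l : List α}
    (h : l.IsChain fun x y => y ∣ x) (hne : l ≠ []) : ∀ x ∈ l, l.getLast hne ∣ x :=
  h.backwards_induction _ l (fun _ _ hyx hy => hy.trans hyx) fun _ => dvd_rfl

theorem pow_mul_pow_dvd_iff {p q : ℕ} (hp : 1 < p) (hq : 1 < q) (hpq : p.Coprime q)
    {i j a b : ℕ} : p ^ i * q ^ j ∣ p ^ a * q ^ b ↔ i ≤ a ∧ j ≤ b := by
  refine ⟨fun h => ⟨?_, ?_⟩, fun ⟨hi, hj⟩ => mul_dvd_mul (pow_dvd_pow p hi) (pow_dvd_pow q hj)⟩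
  · refine (Nat.pow_dvd_pow_iff_le_right hp).mp ((hpq.pow i b).dvd_of_dvd_mul_right ?_)
    exact (dvd_mul_right _ _).trans h
  · refine (Nat.pow_dvd_pow_iff_le_right hq).mp ((hpq.symm.pow j a).dvd_of_dvd_mul_left ?_)
    exact (dvd_mul_left _ _).trans h

theorem exists_pow_mul_pow_of_mul_eq {p q : ℕ} (hp : 1 < p) (hq : 1 < q) (hpq : p.Coprime q)
    {i j a b x : ℕ} (h : p ^ i * q ^ j * x = p ^ a * q ^ b) : ∃ c e, x = p ^ c * q ^ e := by
  obtain ⟨hi, hj⟩ := (pow_mul_pow_dvd_iff hp hq hpq).mp (Dvd.intro x h)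
  refine ⟨a - i, b - j, Nat.eq_of_mul_eq_mul_left (by positivity : 0 < p ^ i * q ^ j) ?_⟩
  rw [h, ← Nat.pow_sub_mul_pow p hi, ← Nat.pow_sub_mul_pow q hj]
  ring

section

variable {p q : ℕ} (hp : 1 < p) (hq : 1 < q) (hpq : p.Coprime q)
include hp hq hpq

theorem isSCPartition_map_mul_iff {d V : ℕ} (hd : ∃ i j, d = p ^ i * q ^ j) {l : List ℕ} :
    IsSCPartition p q (d * V) (l.map (d * ·)) ↔ IsSCPartition p q V l := by
  obtain ⟨i, j, rfl⟩ := hd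
  have hd0 : 0 < p ^ i * q ^ j := by positivity
  have hsum : (l.map (p ^ i * q ^ j * ·)).sum = p ^ i * q ^ j * l.sum := by
    simpa using List.sum_map_mul_left l id (p ^ i * q ^ j)
  simp only [IsSCPartition, List.forall_mem_map, List.Chain', List.isChain_map, hsum,
    Nat.mul_dvd_mul_iff_left hd0, Nat.mul_lt_mul_left hd0, Nat.mul_right_inj hd0.ne']
  refine and_congr (forall₂_congr fun x _ => ⟨fun ⟨a, b, h⟩ => ?_, fun ⟨a, b, h⟩ => ?_⟩) Iff.rfl
  · exact exists_pow_mul_pow_of_mul_eq hp hq hpq h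
  · exact ⟨a + i, b + j, by rw [h]; ring⟩

theorem omegaDvd_eq_image {d U : ℕ} (hd : ∃ i j, d = p ^ i * q ^ j) (hdU : d ∣ U) :
    OmegaDvd p q d U = (List.map (d * ·)) '' Omega p q (U / d) := by
  have hU : U = d * (U / d) := (Nat.mul_div_cancel' hdU).symm
  ext l
  constructor
  · rintro ⟨hl, hdvd⟩
    have hmap : (l.map (· / d)).map (d * ·) = l := by
      rw [List.map_map]
      exact List.map_congr_left (fun x hx => Nat.mul_div_cancel' (hdvd x hx)) |>.trans l.map_id
    refine ⟨l.map (· / d), ?_, hmap⟩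
    rw [hU, ← hmap] at hl
    exact (isSCPartition_map_mul_iff hp hq hpq hd).mp hl
  · rintro ⟨l, hl, rfl⟩
    refine ⟨?_, List.forall_mem_map.mpr fun x _ => dvd_mul_right d x⟩
    rw [hU]
    exact (isSCPartition_map_mul_iff hp hq hpq hd).mpr hl

theorem ncard_omegaDvd {d U : ℕ} (hd : ∃ i j, d = p ^ i * q ^ j) :
    (OmegaDvd p q d U).ncard = if d ∣ U then W p q (U / d) else 0 := by
  split_ifs with hdU
  · have hd0 : 0 < d := by obtain ⟨i, j, rfl⟩ := hd; positivity
    rw [omegaDvd_eq_image hp hq hpq hd hdU, W]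
    exact Set.ncard_image_of_injective _ (List.map_injective_iff.mpr (mul_right_injective₀ hd0.ne'))
  · have hempty : OmegaDvd p q d U = ∅ :=
      Set.eq_empty_of_forall_notMem fun _ ⟨⟨_, _, hsum⟩, hdvd⟩ => hdU (hsum ▸ List.dvd_sum hdvd)
    rw [hempty, Set.ncard_empty]

end

theorem omegaDvd_inter {p q d e U : ℕ} (hde : d.Coprime e) :
    OmegaDvd p q d U ∩ OmegaDvd p q e U = OmegaDvd p q (d * e) U := by
  ext l
  constructor
  · rintro ⟨⟨hl, hd⟩, ⟨_, he⟩⟩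
    exact ⟨hl, fun x hx => hde.mul_dvd_of_dvd_of_dvd (hd x hx) (he x hx)⟩
  · rintro ⟨hl, hde⟩
    exact ⟨⟨hl, fun x hx => (dvd_mul_right d e).trans (hde x hx)⟩,
      ⟨hl, fun x hx => (dvd_mul_left e d).trans (hde x hx)⟩⟩

theorem omegaDvd_finite (p q d U : ℕ) : (OmegaDvd p q d U).Finite :=
  (omega_finite p q U).subset fun _ hl => hl.1

theorem omegaStar_eq_union {p q U : ℕ} (hp : 1 < p) (hq : 1 < q) (hU : 1 ≤ U) :
    OmegaStar p q U = OmegaDvd p q p U ∪ OmegaDvd p q q U := by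
  ext l
  constructor
  · rintro ⟨hl, hone⟩
    have ⟨hform, hchain, hsum⟩ := hl
    have hne : l ≠ [] := by rintro rfl; simp at hsum; omega
    have hlast := List.getLast_dvd_of_isChain (hchain.imp fun _ _ h => h.1) hne
    obtain ⟨a, b, hab⟩ := hform _ (l.getLast_mem hne)
    rcases Nat.eq_zero_or_pos a with rfl | ha
    · rcases Nat.eq_zero_or_pos b with rfl | hb
      · exact absurd (hab ▸ l.getLast_mem hne) (by simpa using hone)
      · refine Or.inr ⟨hl, fun x hx => ?_⟩
        exact ((dvd_pow_self q hb.ne').mul_left _).trans (hab ▸ hlast x hx)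
    · refine Or.inl ⟨hl, fun x hx => ?_⟩
      exact ((dvd_pow_self p ha.ne').mul_right _).trans (hab ▸ hlast x hx)
  · have hnot1 {d : ℕ} (hd : 1 < d) (hdvd : ∀ x ∈ l, d ∣ x) : 1 ∉ l :=
      fun h1 => absurd (Nat.le_of_dvd one_pos (hdvd 1 h1)) (by omega)
    rintro (⟨hl, hdvd⟩ | ⟨hl, hdvd⟩)
    · exact ⟨hl, hnot1 hp hdvd⟩
    · exact ⟨hl, hnot1 hq hdvd⟩

theorem Wstar_eq (p q : ℕ) (hp : 1 < p) (hq : 1 < q) (hpq : Nat.Coprime p q)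
    (U : ℕ) (hU : 1 ≤ U) :
    (Wstar p q U : ℤ) =
      (if p ∣ U then (W p q (U / p) : ℤ) else 0) +
      (if q ∣ U then (W p q (U / q) : ℤ) else 0) -
      (if p * q ∣ U then (W p q (U / (p * q)) : ℤ) else 0) := by
  have hincl_excl := Set.ncard_union_add_ncard_inter _ _
    (omegaDvd_finite p q p U) (omegaDvd_finite p q q U)
  rw [← omegaStar_eq_union hp hq hU, omegaDvd_inter hpq,
    ncard_omegaDvd hp hq hpq (d := p) ⟨1, 0, by ring⟩,
    ncard_omegaDvd hp hq hpq (d := q) ⟨0, 1, by ring⟩,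
    ncard_omegaDvd hp hq hpq (d := p * q) ⟨1, 1, by ring⟩] at hincl_excl
  rw [Wstar, eq_sub_iff_add_eq]
  exact_mod_cast hincl_excl
end

section
/- For every integer U ≥ 1 such that Ω(pqU) is nonempty: (i) at least one of Ω(pU), Ω(qU) is nonempty and σ(pqU) is the minimum of σ(pU) and σ(qU), where a term is omitted from the minimum if the corresponding set is empty; and (ii) Ω(pqU+1) is nonempty and σ(pqU+1) = 1 + σ(pqU). -/
/-- `sigma p q U` is the minimum number of parts of a strictly chained `(p,q)`-ary
partition of `U` (when `Omega p q U` is nonempty). -/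
noncomputable def sigmaMin (p q U : ℕ) : ℕ := sInf {n | ∃ l ∈ Omega p q U, l.length = n}

/-! The smallest (last) part of a strictly chained partition divides every part. A partition of
`p*q*U` cannot contain the part `1`: it would be the last part, and the other parts would form a
partition of `p*q*U - 1` without the part `1`, whose smallest part is a power product other than
`1`, so that `p` or `q` would divide `p*q*U - 1`. Hence every part of a partition of `p*q*U` is
divisible by `p` or every part by `q`, and dividing it out is a length-preserving bijection with
the partitions of `q*U` and of `p*U`. Dually, a partition of `p*q*U + 1` must end in the part `1`,
since otherwise `p` or `q` would divide `p*q*U + 1`, and removing that part is a bijection onto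
the partitions of `p*q*U`. -/

section

variable {p q : ℕ}

theorem omega_comm (p q N : ℕ) : Omega p q N = Omega q p N := by
  have h (x : ℕ) : (∃ a b, x = p ^ a * q ^ b) ↔ ∃ b a, x = q ^ b * p ^ a := by
    rw [exists_comm]; simp only [mul_comm]
  ext l
  simp only [Omega, IsSCPartition, Set.mem_ofPred_eq, h]

theorem dvd_or_dvd_of_pow_mul_pow_ne_one {a b : ℕ} (h : p ^ a * q ^ b ≠ 1) :
    p ∣ p ^ a * q ^ b ∨ q ∣ p ^ a * q ^ b := by
  rcases a with _ | a
  · rcases b with _ | b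
    · simp at h
    · exact .inr (dvd_mul_of_dvd_right (dvd_pow_self q b.succ_ne_zero) _)
  · exact .inl (dvd_mul_of_dvd_left (dvd_pow_self p a.succ_ne_zero) _)

theorem exists_mul_eq_pow_mul_pow_iff (hp : 0 < p) (hpq : p.Coprime q) {x : ℕ} :
    (∃ a b, p * x = p ^ a * q ^ b) ↔ ∃ a b, x = p ^ a * q ^ b := by
  constructor
  · rintro ⟨_ | a, b, h⟩
    · have hp1 : p = 1 := (hpq.pow_right b).eq_one_of_dvd ⟨x, by simpa using h.symm⟩
      exact ⟨0, b, by simpa [hp1] using h⟩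
    · exact ⟨a, b, Nat.eq_of_mul_eq_mul_left hp (h.trans (by ring))⟩
  · rintro ⟨a, b, rfl⟩
    exact ⟨a + 1, b, by ring⟩

theorem exists_eq_append_one {l : List ℕ} (hl : l.IsChain fun x y => y ∣ x ∧ y < x)
    (h1 : 1 ∈ l) : ∃ m, l = m ++ [1] := by
  obtain ⟨s, t, rfl⟩ := List.append_of_mem h1
  rcases t with _ | ⟨y, t⟩
  · exact ⟨s, rfl⟩
  · have ⟨hy, hy1⟩ := (List.isChain_cons_cons.1 hl.right_of_append).1
    rw [Nat.dvd_one.1 hy] at hy1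
    exact absurd hy1 (lt_irrefl 1)

theorem forall_dvd_or_forall_dvd {N : ℕ} {l : List ℕ} (hl : l ∈ Omega p q N) (h1 : 1 ∉ l) :
    (∀ x ∈ l, p ∣ x) ∨ (∀ x ∈ l, q ∣ x) := by
  rcases eq_or_ne l [] with rfl | hne
  · simp
  have hlast := List.getLast_mem hne
  obtain ⟨a, b, hab⟩ := hl.1 _ hlast
  have hchain : l.IsChain fun x y => y ∣ x ∧ y < x := hl.2.1
  have propagate (d : ℕ) (hd : d ∣ l.getLast hne) : ∀ x ∈ l, d ∣ x :=
    hchain.backwards_induction (d ∣ ·) l (fun _ _ hxy hy => hy.trans hxy.1) fun _ => hd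
  have hlast1 : l.getLast hne ≠ 1 := ne_of_mem_of_not_mem hlast h1
  rw [hab] at hlast1
  exact (hab ▸ dvd_or_dvd_of_pow_mul_pow_ne_one hlast1).imp (propagate p) (propagate q)

theorem dvd_or_dvd_of_one_notMem {N : ℕ} {l : List ℕ} (hl : l ∈ Omega p q N) (h1 : 1 ∉ l) :
    p ∣ N ∨ q ∣ N := by
  rw [← hl.2.2]
  exact (forall_dvd_or_forall_dvd hl h1).imp List.dvd_sum List.dvd_sum

theorem not_dvd_add_one_of_dvd {r N : ℕ} (hr : 1 < r) (h : r ∣ N) : ¬r ∣ N + 1 := fun h' =>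
  hr.ne' (Nat.dvd_one.1 ((Nat.dvd_add_right h).1 h'))

theorem append_one_mem_omega_iff (hp : 0 < p) (hq : 0 < q) {M : ℕ} {m : List ℕ} :
    m ++ [1] ∈ Omega p q (M + 1) ↔ m ∈ Omega p q M ∧ 1 ∉ m := by
  constructor
  · rintro ⟨hparts, hchain, hsum⟩
    have hchain' : (m ++ [1]).IsChain fun x y => y ∣ x ∧ y < x := hchain
    have hdec : (m ++ [1]).Pairwise (· > ·) :=
      List.isChain_iff_pairwise.1 (hchain'.imp fun _ _ h => h.2)
    refine ⟨⟨fun x hx => hparts x (List.mem_append_left _ hx), hchain'.left_of_append,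
      by simpa using hsum⟩, fun h1 => ?_⟩
    exact lt_irrefl 1 ((List.pairwise_append.1 hdec).2.2 1 h1 1 (List.mem_singleton_self 1))
  · rintro ⟨⟨hparts, hchain, hsum⟩, h1⟩
    refine ⟨?_, List.IsChain.append hchain (List.isChain_singleton 1) fun x hx y hy => ?_,
      by simp [hsum]⟩
    · simp only [List.mem_append, List.mem_singleton]
      rintro x (hx | rfl)
      exacts [hparts x hx, ⟨0, 0, by simp⟩]
    · have hxm : x ∈ m := List.mem_of_getLast? hx
      obtain rfl : 1 = y := by simpa using hy
      obtain ⟨a, b, hx'⟩ := hparts x hxm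
      have : 0 < x := hx' ▸ by positivity
      have : x ≠ 1 := ne_of_mem_of_not_mem hxm h1
      exact ⟨one_dvd x, by omega⟩

theorem one_notMem_of_dvd (hp : 1 < p) (hq : 1 < q) {N : ℕ} (hpN : p ∣ N) (hqN : q ∣ N)
    {l : List ℕ} (hl : l ∈ Omega p q N) : 1 ∉ l := by
  intro h1
  obtain ⟨m, rfl⟩ := exists_eq_append_one hl.2.1 h1
  obtain rfl : N = m.sum + 1 := by simpa using hl.2.2.symm
  obtain ⟨hm, h1m⟩ := (append_one_mem_omega_iff (by omega) (by omega)).1 hl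
  rcases dvd_or_dvd_of_one_notMem hm h1m with h | h
  exacts [not_dvd_add_one_of_dvd hp h hpN, not_dvd_add_one_of_dvd hq h hqN]

theorem omega_add_one_eq_image (hp : 1 < p) (hq : 1 < q) {N : ℕ} (hpN : p ∣ N) (hqN : q ∣ N) :
    Omega p q (N + 1) = (· ++ [1]) '' Omega p q N := by
  have happ {m : List ℕ} := append_one_mem_omega_iff (p := p) (q := q) (by omega) (by omega)
    (M := N) (m := m)
  ext l
  constructor
  · intro hl
    have h1 : 1 ∈ l := by
      by_contra h1
      rcases dvd_or_dvd_of_one_notMem hl h1 with h | h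
      exacts [not_dvd_add_one_of_dvd hp hpN h, not_dvd_add_one_of_dvd hq hqN h]
    obtain ⟨m, rfl⟩ := exists_eq_append_one hl.2.1 h1
    exact ⟨m, (happ.1 hl).1, rfl⟩
  · rintro ⟨m, hm, rfl⟩
    exact happ.2 ⟨hm, one_notMem_of_dvd hp hq hpN hqN hm⟩

theorem map_mul_mem_omega_iff (hp : 0 < p) (hpq : p.Coprime q) {M : ℕ} {m : List ℕ} :
    m.map (p * ·) ∈ Omega p q (p * M) ↔ m ∈ Omega p q M := by
  have hchain : (m.map (p * ·)).IsChain (fun x y => y ∣ x ∧ y < x) ↔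
      m.IsChain (fun x y => y ∣ x ∧ y < x) := by
    rw [List.isChain_map]
    exact List.IsChain.iff fun x y =>
      and_congr (Nat.mul_dvd_mul_iff_left hp) (Nat.mul_lt_mul_left hp)
  have hsum : (m.map (p * ·)).sum = p * m.sum := by simpa using List.sum_map_mul_left m id p
  show IsSCPartition p q (p * M) (m.map (p * ·)) ↔ IsSCPartition p q M m
  refine and_congr ?_ (and_congr hchain (by rw [hsum, Nat.mul_left_cancel_iff hp]))
  simp only [List.forall_mem_map, exists_mul_eq_pow_mul_pow_iff hp hpq]

theorem mem_image_map_mul_iff (hp : 0 < p) (hpq : p.Coprime q) {M : ℕ} {l : List ℕ} :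
    l ∈ List.map (p * ·) '' Omega p q M ↔ l ∈ Omega p q (p * M) ∧ ∀ x ∈ l, p ∣ x := by
  constructor
  · rintro ⟨m, hm, rfl⟩
    exact ⟨(map_mul_mem_omega_iff hp hpq).2 hm, by simp⟩
  · rintro ⟨hl, hdvd⟩
    have hl' : (l.map (· / p)).map (p * ·) = l := by
      rw [List.map_map]
      exact (List.map_congr_left fun x hx => Nat.mul_div_cancel' (hdvd x hx)).trans l.map_id
    exact ⟨l.map (· / p), (map_mul_mem_omega_iff hp hpq).1 (by rwa [hl']), hl'⟩

theorem omega_mul_mul_eq_union (hp : 1 < p) (hq : 1 < q) (hpq : p.Coprime q) (U : ℕ) :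
    Omega p q (p * q * U) =
      List.map (q * ·) '' Omega p q (p * U) ∪ List.map (p * ·) '' Omega p q (q * U) := by
  have hq_image {l : List ℕ} :
      l ∈ List.map (q * ·) '' Omega p q (p * U) ↔
        l ∈ Omega p q (q * (p * U)) ∧ ∀ x ∈ l, q ∣ x := by
    simpa only [omega_comm p q] using mem_image_map_mul_iff (by omega) hpq.symm
  ext l
  rw [Set.mem_union, hq_image, mem_image_map_mul_iff (by omega) hpq,
    show q * (p * U) = p * q * U by ring, ← mul_assoc, ← and_or_left]
  refine ⟨fun hl => ⟨hl, (forall_dvd_or_forall_dvd hl ?_).symm⟩, And.left⟩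
  exact one_notMem_of_dvd hp hq ((dvd_mul_right p q).mul_right U)
    ((dvd_mul_left q p).mul_right U) hl

theorem image_length_omega_mul_mul (hp : 1 < p) (hq : 1 < q) (hpq : p.Coprime q) (U : ℕ) :
    List.length '' Omega p q (p * q * U) =
      List.length '' Omega p q (p * U) ∪ List.length '' Omega p q (q * U) := by
  rw [omega_mul_mul_eq_union hp hq hpq, Set.image_union, Set.image_image, Set.image_image]
  simp only [List.length_map]

theorem image_length_omega_add_one (hp : 1 < p) (hq : 1 < q) {N : ℕ} (hpN : p ∣ N)
    (hqN : q ∣ N) :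
    List.length '' Omega p q (N + 1) = (· + 1) '' (List.length '' Omega p q N) := by
  rw [omega_add_one_eq_image hp hq hpN hqN, Set.image_image, Set.image_image]
  simp only [List.length_append, List.length_singleton]

theorem sigmaMin_eq_sInf_image_length (p q N : ℕ) :
    sigmaMin p q N = sInf (List.length '' Omega p q N) :=
  rfl

end

theorem sigma_rec_general (p q : ℕ) (hp : 1 < p) (hq : 1 < q) (hpq : Nat.Coprime p q)
    (U : ℕ) (h : (Omega p q (p * q * U)).Nonempty) :
    ((Omega p q (p * U)).Nonempty ∨ (Omega p q (q * U)).Nonempty) ∧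
    ((Omega p q (p * U)).Nonempty → (Omega p q (q * U)).Nonempty →
      sigmaMin p q (p * q * U) = min (sigmaMin p q (p * U)) (sigmaMin p q (q * U))) ∧
    ((Omega p q (p * U)).Nonempty → ¬ (Omega p q (q * U)).Nonempty →
      sigmaMin p q (p * q * U) = sigmaMin p q (p * U)) ∧
    (¬ (Omega p q (p * U)).Nonempty → (Omega p q (q * U)).Nonempty →
      sigmaMin p q (p * q * U) = sigmaMin p q (q * U)) ∧
    (Omega p q (p * q * U + 1)).Nonempty ∧
    sigmaMin p q (p * q * U + 1) = 1 + sigmaMin p q (p * q * U) := by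
  have hpqU : p ∣ p * q * U := (dvd_mul_right p q).mul_right U
  have hqpU : q ∣ p * q * U := (dvd_mul_left q p).mul_right U
  simp only [sigmaMin_eq_sInf_image_length, ← Set.image_nonempty (f := List.length),
    image_length_omega_add_one hp hq hpqU hqpU] at h ⊢
  rw [image_length_omega_mul_mul hp hq hpq] at h ⊢
  refine ⟨Set.union_nonempty.1 h, fun hA hB => csInf_union (OrderBot.bddBelow _) hA
    (OrderBot.bddBelow _) hB, fun _ hB => ?_, fun hA _ => ?_, h.image _, ?_⟩
  · rw [Set.not_nonempty_iff_eq_empty.1 hB, Set.union_empty]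
  · rw [Set.not_nonempty_iff_eq_empty.1 hA, Set.empty_union]
  · rw [← Monotone.map_csInf (f := (· + 1)) (fun _ _ => Nat.succ_le_succ) h, add_comm]

theorem sigma_rec (p q : ℕ) (hp : 1 < p) (hq : 1 < q) (hpq : Nat.Coprime p q)
    (U : ℕ) (hU : 1 ≤ U) (h : (Omega p q (p * q * U)).Nonempty) :
    ((Omega p q (p * U)).Nonempty ∨ (Omega p q (q * U)).Nonempty) ∧
    ((Omega p q (p * U)).Nonempty → (Omega p q (q * U)).Nonempty →
      sigmaMin p q (p * q * U) = min (sigmaMin p q (p * U)) (sigmaMin p q (q * U))) ∧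
    ((Omega p q (p * U)).Nonempty → ¬ (Omega p q (q * U)).Nonempty →
      sigmaMin p q (p * q * U) = sigmaMin p q (p * U)) ∧
    (¬ (Omega p q (p * U)).Nonempty → (Omega p q (q * U)).Nonempty →
      sigmaMin p q (p * q * U) = sigmaMin p q (q * U)) ∧
    (Omega p q (p * q * U + 1)).Nonempty ∧
    sigmaMin p q (p * q * U + 1) = 1 + sigmaMin p q (p * q * U) :=
  sigma_rec_general p q hp hq hpq U h
end

section
/- Assume p < q and let N = ⌊log_p(q − (q−1)/p)⌋ (logarithm in base p of the real number q − (q−1)/p). Then for all nonnegative integers U and c, if δ_{p,q}(c,U) = 1 then δ_{p,q}(c+k,U) = 0 for every integer k with k ≥ −c and 0 < |k| ≤ N. -/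
/-- `Wp p n` is the number of partitions of `n` into distinct powers of `p`;
equivalently, it is `1` if every digit of `n` in base `p` is `0` or `1`, and `0`
otherwise (with `Wp p 0 = 1`). -/
def Wp (p n : ℕ) : ℕ := if ∀ d ∈ Nat.digits p n, d ≤ 1 then 1 else 0

/-- `delta p q c U` equals `1` if `⌊U/p^c⌋ ≡ 1 (mod q)` and `Wp p (U mod p^c) = 1`,
and `0` otherwise. -/
def delta (p q c U : ℕ) : ℕ :=
  if (U / p ^ c) % q = 1 ∧ Wp p (U % p ^ c) = 1 then 1 else 0

/-!
If `δ(a, U) = δ(a + k, U) = 1` with `k > 0`, split `⌊U / p^a⌋ = p^k A + m` with `A = ⌊U / p^(a+k)⌋`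
and `m < p^k`. The digits of `m` are digits of `U mod p^(a+k)`, hence `0` or `1`, so
`m ≤ 1 + p + ⋯ + p^(k-1)`. Since `A ≡ 1 (mod q)`, also `p^k + m ≡ 1 (mod q)`. But `k ≤ N` means
`p^k ≤ q - (q-1)/p`, which makes `2 ≤ p^k + m ≤ q`, and no such number is `≡ 1 (mod q)`.
-/

theorem Nat.digits_div_pow_subset {b : ℕ} (hb : 1 < b) (n j : ℕ) :
    Nat.digits b (n / b ^ j) ⊆ Nat.digits b n := by
  induction j with
  | zero => simp
  | succ j ih =>
    rw [pow_succ, ← Nat.div_div_eq_div_mul]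
    refine List.Subset.trans ?_ ih
    rcases eq_or_ne (n / b ^ j) 0 with h0 | h0
    · simp [h0]
    · rw [Nat.digits_eq_cons_digits_div hb h0 (n := n / b ^ j)]
      exact List.subset_cons_self _ _

theorem Nat.mul_pred_add_one_le_pow_of_digits_le_one {p : ℕ} (hp : 1 < p) {m k : ℕ}
    (hdig : ∀ d ∈ Nat.digits p m, d ≤ 1) (hm : m < p ^ k) : m * (p - 1) + 1 ≤ p ^ k := by
  induction k generalizing m with
  | zero => simp_all
  | succ k ih =>
    rcases eq_or_ne m 0 with rfl | h0
    · simpa using Nat.one_le_pow _ _ (by omega)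
    rw [Nat.digits_eq_cons_digits_div hp h0] at hdig
    have hlow : m % p ≤ 1 := hdig _ List.mem_cons_self
    have hhigh : m / p * (p - 1) + 1 ≤ p ^ k :=
      ih (fun d hd => hdig d (List.mem_cons_of_mem _ hd))
        (Nat.div_lt_of_lt_mul (by rwa [← pow_succ']))
    obtain ⟨r, rfl⟩ : ∃ r, p = r + 1 := ⟨p - 1, by omega⟩
    have hdecomp : m = (r + 1) * (m / (r + 1)) + m % (r + 1) := (Nat.div_add_mod m _).symm
    simp only [Nat.add_sub_cancel] at hhigh ⊢
    rw [pow_succ]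
    nlinarith

theorem Nat.mod_ne_one_of_two_le_of_le {n q : ℕ} (h2 : 2 ≤ n) (hq : n ≤ q) : n % q ≠ 1 := by
  rcases hq.lt_or_eq with hlt | rfl
  · rw [Nat.mod_eq_of_lt hlt]; omega
  · simp

theorem Wp_eq_one_iff {p n : ℕ} : Wp p n = 1 ↔ ∀ d ∈ Nat.digits p n, d ≤ 1 := by
  unfold Wp; split_ifs <;> simp_all

theorem delta_eq_one_iff {p q c U : ℕ} :
    delta p q c U = 1 ↔ U / p ^ c % q = 1 ∧ ∀ d ∈ Nat.digits p (U % p ^ c), d ≤ 1 := by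
  rw [← Wp_eq_one_iff]; unfold delta; split_ifs <;> simp_all

theorem delta_eq_one_of_ne_zero {p q c U : ℕ} (h : delta p q c U ≠ 0) : delta p q c U = 1 := by
  unfold delta at h ⊢; split_ifs at h ⊢ <;> simp_all

theorem pow_succ_add_le_of_le_floor_logb {p q k : ℕ} (hp : 1 < p) (hq : 0 < q)
    (hk : k ≤ ⌊Real.logb p ((q : ℝ) - ((q : ℝ) - 1) / (p : ℝ))⌋₊) :
    p ^ (k + 1) + q ≤ p * q + 1 := by
  set x : ℝ := (q : ℝ) - ((q : ℝ) - 1) / (p : ℝ) with hx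
  have hp' : (1 : ℝ) < p := by exact_mod_cast hp
  have hq' : (1 : ℝ) ≤ q := by exact_mod_cast hq
  have hx1 : 1 ≤ x := by
    have : ((q : ℝ) - 1) / p ≤ q - 1 := div_le_self (by linarith) hp'.le
    linarith
  have hlog : (k : ℝ) ≤ Real.logb p x :=
    (Nat.le_floor_iff (Real.logb_nonneg hp' hx1)).mp hk
  have hpow : (p : ℝ) ^ k ≤ x := by
    rw [← Real.rpow_natCast]
    exact (Real.le_logb_iff_rpow_le hp' (by linarith)).mp hlog
  have hpx : (p : ℝ) * x = p * q - (q - 1) := by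
    rw [hx]; field_simp
  have : (p : ℝ) ^ (k + 1) + q ≤ p * q + 1 := by
    rw [pow_succ']
    nlinarith [mul_le_mul_of_nonneg_left hpow (by linarith : (0 : ℝ) ≤ p)]
  exact_mod_cast this

theorem not_delta_eq_one_and_delta_add_eq_one {p q a k U : ℕ} (hp : 1 < p) (hk : 0 < k)
    (hbound : p ^ (k + 1) + q ≤ p * q + 1) :
    ¬ (delta p q a U = 1 ∧ delta p q (a + k) U = 1) := by
  simp only [delta_eq_one_iff]
  rintro ⟨⟨ha, -⟩, hb, hdig⟩
  set m := U / p ^ a % p ^ k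
  have hsplit : U / p ^ a = p ^ k * (U / p ^ (a + k)) + m := by
    rw [pow_add, ← Nat.div_div_eq_div_mul, Nat.div_add_mod]
  have hm_lt : m < p ^ k := Nat.mod_lt _ (by positivity)
  have hm_eq : m = U % p ^ (a + k) / p ^ a := by rw [pow_add, Nat.mod_mul_right_div_self]
  have hm_le : m * (p - 1) + 1 ≤ p ^ k :=
    Nat.mul_pred_add_one_le_pow_of_digits_le_one hp
      (fun d hd => hdig d (Nat.digits_div_pow_subset hp _ a (hm_eq ▸ hd))) hm_lt
  have hmod : (p ^ k + m) % q = 1 := by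
    rw [← ha, hsplit, Nat.add_mod (p ^ k * _), Nat.mul_mod, hb, mul_one, Nat.mod_mod,
      ← Nat.add_mod]
  have htwo : 2 ≤ p ^ k + m := le_add_right (hp.trans_le (Nat.le_self_pow hk.ne' p))
  have hle : p ^ k + m ≤ q := by
    obtain ⟨r, rfl⟩ : ∃ r, p = r + 1 := ⟨p - 1, by omega⟩
    simp only [Nat.add_sub_cancel, pow_succ] at hm_le hbound
    nlinarith
  exact Nat.mod_ne_one_of_two_le_of_le htwo hle hmod

theorem delta_vanishing_general (p q : ℕ) (hp : 1 < p) (hpq' : p < q)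
    (N : ℕ) (hN : N = ⌊Real.logb p ((q : ℝ) - ((q : ℝ) - 1) / (p : ℝ))⌋₊)
    (U c : ℕ) (h : delta p q c U = 1) :
    ∀ k : ℤ, -(c : ℤ) ≤ k → 0 < |k| → |k| ≤ (N : ℤ) →
      delta p q ((c : ℤ) + k).toNat U = 0 := by
  intro k hkc hk0 hkN
  have hwindow : ∀ a j, 0 < j → j ≤ N → ¬ (delta p q a U = 1 ∧ delta p q (a + j) U = 1) :=
    fun a j hj hjN => not_delta_eq_one_and_delta_add_eq_one hp hj
      (pow_succ_add_le_of_le_floor_logb hp (by omega) (hN ▸ hjN))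
  by_contra hne
  have h' := delta_eq_one_of_ne_zero hne
  rcases lt_or_gt_of_ne (abs_pos.mp hk0) with hneg | hpos
  · rw [abs_of_neg hneg] at hkN
    refine hwindow ((c : ℤ) + k).toNat (-k).toNat (by omega) (by omega) ⟨h', ?_⟩
    convert h using 2; omega
  · rw [abs_of_pos hpos] at hkN
    refine hwindow c k.toNat (by omega) (by omega) ⟨h, ?_⟩
    convert h' using 2; omega

theorem delta_vanishing (p q : ℕ) (hp : 1 < p) (hpq' : p < q) (hpq : Nat.Coprime p q)
    (N : ℕ) (hN : N = ⌊Real.logb p ((q : ℝ) - ((q : ℝ) - 1) / (p : ℝ))⌋₊)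
    (U c : ℕ) (h : delta p q c U = 1) :
    ∀ k : ℤ, -(c : ℤ) ≤ k → 0 < |k| → |k| ≤ (N : ℤ) →
      delta p q ((c : ℤ) + k).toNat U = 0 :=
  delta_vanishing_general p q hp hpq' N hN U c h
end
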